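/- arXiv:2111.01279 — 2 statements merged into one kernel-verified Lean document; each statement's English description precedes it below -/
import Mathlib

section
/- Let π be a sum-indecomposable pattern (a permutation of 0,1,…,j−1 with j ≥ 3 such that there is no i ∈ [1, j−1] with max{π₁,…,π_i} < min{π_{i+1},…,π_j}). Let c_k denote the number of π-avoiding ascent sequences of length k. Then c_{m+n} ≥ c_m · c_n for all m, n ≥ 1. -/
open Filter Topology

/-- Number of ascents in a sequence (list) of naturals. -/
def asc (s : List ℕ) : ℕ :=
  ((s.zip s.tail).filter (fun p => p.1 < p.2)).length

/-- `s` is an ascent sequence: first entry `0`, and each later entry is at most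
one more than the number of ascents of the preceding prefix. -/
def IsAscentSeq (s : List ℕ) : Prop :=
  (0 < s.length → s.getD 0 0 = 0) ∧
  ∀ i, 0 < i → i < s.length → s.getD i 0 ≤ asc (s.take i) + 1

/-- `s` is a weak ascent sequence: every entry is at most the number of ascents. -/
def IsWeakAscentSeq (s : List ℕ) : Prop :=
  ∀ x ∈ s, x ≤ asc s

/-- `s` contains the pattern `p`: some subsequence of `s` is order-isomorphic
(including equalities) to `p`. -/
def ContainsPattern (s p : List ℕ) : Prop :=
  ∃ idx : Fin p.length → ℕ, StrictMono idx ∧ (∀ a, idx a < s.length) ∧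
    ∀ a b : Fin p.length, p.get a < p.get b ↔ s.getD (idx a) 0 < s.getD (idx b) 0

def AvoidsPattern (s p : List ℕ) : Prop := ¬ ContainsPattern s p

/-- A pattern of length `j` is a permutation of `0,…,j-1`. -/
def IsPattern (p : List ℕ) : Prop := List.Perm p (List.range p.length)

/-- Sum-indecomposable: no proper prefix whose entries are all smaller than
all entries of the complementary suffix. -/
def SumIndecomposable (p : List ℕ) : Prop :=
  ¬ ∃ i, 0 < i ∧ i < p.length ∧ ∀ x ∈ p.take i, ∀ y ∈ p.drop i, x < y

/-- Number of `p`-avoiding ascent sequences of length `k`. -/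
noncomputable def ascentAvoidCount (p : List ℕ) (k : ℕ) : ℕ :=
  {s : List ℕ | s.length = k ∧ IsAscentSeq s ∧ AvoidsPattern s p}.ncard

/-- Number of `p`-avoiding weak ascent sequences of length `k`. -/
noncomputable def weakAvoidCount (p : List ℕ) (k : ℕ) : ℕ :=
  {s : List ℕ | s.length = k ∧ IsWeakAscentSeq s ∧ AvoidsPattern s p}.ncard

def listMax (s : List ℕ) : ℕ := s.foldr max 0
def listMin (s : List ℕ) : ℕ := s.foldr min (listMax s)

/-- Reverse-complement map: `m j = max + min - n (k+1-j)`. -/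
def revComp (s : List ℕ) : List ℕ :=
  s.reverse.map (fun x => listMax s + listMin s - x)

/-- Occurrence of pattern 000: three equal entries. -/
def Contains000 (s : List ℕ) : Prop :=
  ∃ a b c, a < b ∧ b < c ∧ c < s.length ∧
    s.getD a 0 = s.getD b 0 ∧ s.getD b 0 = s.getD c 0

/-- Occurrence of pattern 100: `n i₁ > n i₂ = n i₃`. -/
def Contains100 (s : List ℕ) : Prop :=
  ∃ a b c, a < b ∧ b < c ∧ c < s.length ∧
    s.getD b 0 < s.getD a 0 ∧ s.getD b 0 = s.getD c 0

/-- Occurrence of pattern 110: `n i₁ = n i₂ > n i₃`. -/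
def Contains110 (s : List ℕ) : Prop :=
  ∃ a b c, a < b ∧ b < c ∧ c < s.length ∧
    s.getD a 0 = s.getD b 0 ∧ s.getD c 0 < s.getD b 0

/-- Occurrence of pattern 120: `n i₂ > n i₁ > n i₃`. -/
def Contains120 (s : List ℕ) : Prop :=
  ∃ a b c, a < b ∧ b < c ∧ c < s.length ∧
    s.getD a 0 < s.getD b 0 ∧ s.getD c 0 < s.getD a 0

/-- Occurrence of pattern 201: `n i₁ > n i₃ > n i₂`. -/
def Contains201 (s : List ℕ) : Prop :=
  ∃ a b c, a < b ∧ b < c ∧ c < s.length ∧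
    s.getD c 0 < s.getD a 0 ∧ s.getD b 0 < s.getD c 0

/-- Occurrence of pattern 012: `n i₁ < n i₂ < n i₃`. -/
def Contains012 (s : List ℕ) : Prop :=
  ∃ a b c, a < b ∧ b < c ∧ c < s.length ∧
    s.getD a 0 < s.getD b 0 ∧ s.getD b 0 < s.getD c 0

/-- Occurrence of pattern 011: `n i₁ < n i₂ = n i₃`. -/
def Contains011 (s : List ℕ) : Prop :=
  ∃ a b c, a < b ∧ b < c ∧ c < s.length ∧
    s.getD a 0 < s.getD b 0 ∧ s.getD b 0 = s.getD c 0

/-- Occurrence of pattern 021: `n i₁ < n i₃ < n i₂`. -/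
def Contains021 (s : List ℕ) : Prop :=
  ∃ a b c, a < b ∧ b < c ∧ c < s.length ∧
    s.getD a 0 < s.getD c 0 ∧ s.getD c 0 < s.getD b 0

/-- Occurrence of pattern 102: `n i₂ < n i₁ < n i₃`. -/
def Contains102 (s : List ℕ) : Prop :=
  ∃ a b c, a < b ∧ b < c ∧ c < s.length ∧
    s.getD b 0 < s.getD a 0 ∧ s.getD a 0 < s.getD c 0

/-- The construction `C = 0101⋯01 W̃₁⋯W̃ₖ` from weak ascent sequences. -/
def buildC (k : ℕ) (W : Fin k → List ℕ) : List ℕ :=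
  (List.replicate k ([0,1] : List ℕ)).flatten ++
    (List.ofFn (fun h : Fin k =>
      (W h).map (fun x =>
        x + 1 + ∑ j ∈ Finset.univ.filter (fun j => j < h), listMax (W j)))).flatten

/-!
The map `(C₁, C₂) ↦ C₁ (C₂ + N₁)`, with `N₁ = max C₁`, is injective on pairs with `|C₁| = m`.
Its values are ascent sequences because `N₁` is at most the number of ascents of `C₁`, so the
shifted entries of `C₂` still respect the ascent bound. They avoid `π`: every entry of `C₁` is at
most every entry of `C₂ + N₁`, so an occurrence of `π` meeting both blocks would split `π`, whose
entries are distinct, into a prefix lying below the complementary suffix.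
-/

@[simp] theorem asc_nil : asc [] = 0 := rfl

@[simp] theorem asc_singleton (a : ℕ) : asc [a] = 0 := rfl

theorem asc_cons_cons (a b : ℕ) (t : List ℕ) :
    asc (a :: b :: t) = (if a < b then 1 else 0) + asc (b :: t) := by
  simp only [asc, List.zip, List.tail]
  split_ifs <;> simp [*, Nat.add_comm]

theorem asc_le_asc_cons (a : ℕ) (t : List ℕ) : asc t ≤ asc (a :: t) := by
  cases t with
  | nil => rfl
  | cons b t => rw [asc_cons_cons]; omega

theorem asc_add_asc_le_asc_append (l r : List ℕ) : asc l + asc r ≤ asc (l ++ r) := by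
  induction l with
  | nil => simp
  | cons a t ih =>
    cases t with
    | nil => simpa using asc_le_asc_cons a r
    | cons b t =>
      rw [List.cons_append, List.cons_append, asc_cons_cons, asc_cons_cons]
      rw [List.cons_append] at ih
      omega

theorem asc_take_le (i : ℕ) (s : List ℕ) : asc (s.take i) ≤ asc s := by
  have h := asc_add_asc_le_asc_append (s.take i) (s.drop i)
  rw [List.take_append_drop] at h
  omega

theorem asc_le_length (s : List ℕ) : asc s ≤ s.length :=
  (List.length_filter_le _ _).trans (by simp)

theorem asc_map_add (N : ℕ) (s : List ℕ) : asc (s.map (· + N)) = asc s := by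
  induction s with
  | nil => rfl
  | cons a t ih =>
    cases t with
    | nil => rfl
    | cons b t =>
      simp only [List.map_cons] at ih ⊢
      rw [asc_cons_cons, asc_cons_cons, ih]
      simp

theorem asc_append_pair (l : List ℕ) (a b : ℕ) :
    asc (l ++ [a, b]) = asc (l ++ [a]) + (if a < b then 1 else 0) := by
  induction l with
  | nil => rw [List.nil_append, asc_cons_cons]; simp
  | cons c t ih =>
    cases t with
    | nil =>
      simp only [List.cons_append, List.nil_append] at ih ⊢
      rw [asc_cons_cons, ih, asc_cons_cons]; omega
    | cons d t =>
      simp only [List.cons_append] at ih ⊢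
      rw [asc_cons_cons, asc_cons_cons, ih]; omega

theorem asc_take_add_two (s : List ℕ) (j : ℕ) (h : j + 1 < s.length) :
    asc (s.take (j + 2)) =
      asc (s.take (j + 1)) + (if s.getD j 0 < s.getD (j + 1) 0 then 1 else 0) := by
  have hj : j < s.length := by omega
  rw [List.getD_eq_getElem s 0 hj, List.getD_eq_getElem s 0 h, ← List.take_concat_get h,
    ← List.take_concat_get hj]
  simp only [List.concat_eq_append, List.append_assoc, List.cons_append, List.nil_append]
  exact asc_append_pair (s.take j) s[j] s[j + 1]

theorem IsAscentSeq.getD_le_asc_take {s : List ℕ} (hs : IsAscentSeq s) {i : ℕ}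
    (hi : i < s.length) : s.getD i 0 ≤ asc (s.take (i + 1)) := by
  induction i with
  | zero => rw [hs.1 hi]; omega
  | succ j ih =>
    rw [asc_take_add_two s j hi]
    split_ifs with hlt
    · exact hs.2 (j + 1) (by omega) hi
    · have := ih (by omega)
      omega

theorem IsAscentSeq.le_asc {s : List ℕ} (hs : IsAscentSeq s) {x : ℕ} (hx : x ∈ s) :
    x ≤ asc s := by
  obtain ⟨i, hi, rfl⟩ := List.mem_iff_getElem.mp hx
  rw [← List.getD_eq_getElem s 0 hi]
  exact (hs.getD_le_asc_take hi).trans (asc_take_le _ _)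

theorem finite_setOf_isAscentSeq (k : ℕ) :
    {s : List ℕ | s.length = k ∧ IsAscentSeq s}.Finite := by
  refine ((List.finite_length_eq (Fin (k + 1)) k).image (List.map Fin.val)).subset ?_
  rintro s ⟨rfl, hs⟩
  have hbound : ∀ x ∈ s, x < s.length + 1 :=
    fun x hx => Nat.lt_succ_of_le ((hs.le_asc hx).trans (asc_le_length s))
  refine ⟨s.pmap (fun x hx => ⟨x, hx⟩) hbound, by simp, ?_⟩
  simp [List.map_pmap]

theorem le_listMax {s : List ℕ} {x : ℕ} (hx : x ∈ s) : x ≤ listMax s := by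
  induction s with
  | nil => simp at hx
  | cons a t ih =>
    rcases List.mem_cons.mp hx with rfl | hx
    · exact le_max_left _ _
    · exact (ih hx).trans (le_max_right _ _)

theorem listMax_le {s : List ℕ} {c : ℕ} (h : ∀ x ∈ s, x ≤ c) : listMax s ≤ c := by
  induction s with
  | nil => exact Nat.zero_le c
  | cons a t ih =>
    exact max_le (h a List.mem_cons_self) (ih fun x hx => h x (List.mem_cons_of_mem a hx))

theorem IsAscentSeq.listMax_le_asc {s : List ℕ} (hs : IsAscentSeq s) : listMax s ≤ asc s :=
  listMax_le fun _ => hs.le_asc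

theorem getD_map_add {l : List ℕ} {N j : ℕ} (hj : j < l.length) :
    (l.map (· + N)).getD j 0 = l.getD j 0 + N := by
  rw [List.getD_eq_getElem _ 0 (by simpa using hj), List.getD_eq_getElem _ 0 hj,
    List.getElem_map]

def shiftConcat (u v : List ℕ) : List ℕ :=
  u ++ v.map (· + listMax u)

theorem shiftConcat_inj {u u' v v' : List ℕ} (hlen : u.length = u'.length)
    (h : shiftConcat u v = shiftConcat u' v') : u = u' ∧ v = v' := by
  obtain ⟨rfl, hv⟩ := List.append_inj h hlen
  exact ⟨rfl, List.map_injective_iff.mpr (add_left_injective _) hv⟩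

theorem isAscentSeq_shiftConcat {u v : List ℕ} (hu : IsAscentSeq u) (hv : IsAscentSeq v) :
    IsAscentSeq (shiftConcat u v) := by
  rcases eq_or_ne u [] with rfl | hne
  · simpa [shiftConcat, listMax] using hv
  have hm : 0 < u.length := List.length_pos_iff.mpr hne
  refine ⟨fun _ => by rw [shiftConcat, List.getD_append _ _ _ _ hm]; exact hu.1 hm, ?_⟩
  intro i hi0 hil
  simp only [shiftConcat, List.length_append, List.length_map] at hil
  rcases lt_or_ge i u.length with hiu | hiu
  · rw [shiftConcat, List.getD_append _ _ _ _ hiu, List.take_append,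
      Nat.sub_eq_zero_of_le hiu.le, List.take_zero, List.append_nil]
    exact hu.2 i hi0 hiu
  obtain ⟨j, rfl⟩ := Nat.exists_eq_add_of_le hiu
  have hj : j < v.length := by omega
  have htake : (shiftConcat u v).take (u.length + j) = u ++ (v.take j).map (· + listMax u) := by
    rw [shiftConcat, List.take_append, List.take_of_length_le (by omega), List.map_take,
      Nat.add_sub_cancel_left]
  have hasc : asc u + asc (v.take j) ≤ asc (u ++ (v.take j).map (· + listMax u)) := by
    simpa only [asc_map_add] using asc_add_asc_le_asc_append u ((v.take j).map (· + listMax u))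
  rw [shiftConcat, List.getD_append_right _ _ _ _ hiu, Nat.add_sub_cancel_left, getD_map_add hj,
    ← shiftConcat, htake]
  have hmax := hu.listMax_le_asc
  rcases j.eq_zero_or_pos with rfl | hj0
  · rw [hv.1 hj]
    omega
  · have := hv.2 j hj0 hj
    omega

theorem AvoidsPattern.map_add {s p : List ℕ} (h : AvoidsPattern s p) (N : ℕ) :
    AvoidsPattern (s.map (· + N)) p := by
  rintro ⟨idx, hmono, hlt, hiff⟩
  have hlt' : ∀ a, idx a < s.length := by simpa using hlt
  refine h ⟨idx, hmono, hlt', fun a b => ?_⟩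
  rw [hiff, getD_map_add (hlt' a), getD_map_add (hlt' b), Nat.add_lt_add_iff_right]

theorem take_lt_drop_of_occurrence {p s : List ℕ} (hp : p.Nodup) {idx : Fin p.length → ℕ}
    (hiff : ∀ a b, p.get a < p.get b ↔ s.getD (idx a) 0 < s.getD (idx b) 0) {t : ℕ}
    (hle : ∀ a b : Fin p.length, (a : ℕ) < t → t ≤ b → s.getD (idx a) 0 ≤ s.getD (idx b) 0) :
    ∀ x ∈ p.take t, ∀ y ∈ p.drop t, x < y := by
  intro x hx y hy
  obtain ⟨i, hi, rfl⟩ := List.mem_take_iff_getElem.mp hx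
  obtain ⟨j, hj, rfl⟩ := List.mem_drop_iff_getElem.mp hy
  let A : Fin p.length := ⟨i, by omega⟩
  let B : Fin p.length := ⟨t + j, by omega⟩
  have hAB : p.get A ≠ p.get B := fun h => by
    have := congrArg Fin.val (hp.get_inj_iff.mp h)
    simp only [A, B] at this
    omega
  have hBA : ¬ p.get B < p.get A := by
    rw [hiff, not_lt]
    exact hle A B (by simp only [A]; omega) (by simp only [B]; omega)
  exact lt_of_le_of_ne (not_lt.mp hBA) hAB

theorem AvoidsPattern.append {p u v : List ℕ} (hp : p.Nodup) (hsi : SumIndecomposable p)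
    (hu : AvoidsPattern u p) (hv : AvoidsPattern v p) (huv : ∀ x ∈ u, ∀ y ∈ v, x ≤ y) :
    AvoidsPattern (u ++ v) p := by
  rintro ⟨idx, hmono, hlt, hiff⟩
  have hlt' : ∀ a, idx a < u.length + v.length := by simpa using hlt
  -- `t` is the number of letters of the occurrence that fall inside `u`.
  have hex : ∃ t : ℕ, ∀ a : Fin p.length, t ≤ a → u.length ≤ idx a :=
    ⟨p.length, fun a ha => absurd a.2 (by omega)⟩
  set t := Nat.find hex
  have hhigh : ∀ a : Fin p.length, t ≤ a → u.length ≤ idx a := Nat.find_spec hex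
  have hlow : ∀ a : Fin p.length, (a : ℕ) < t → idx a < u.length := fun a ha => by
    by_contra h
    exact Nat.find_min hex ha fun b hb => (not_lt.mp h).trans (hmono.monotone hb)
  have hgetD_u : ∀ a : Fin p.length, (a : ℕ) < t →
      (u ++ v).getD (idx a) 0 = u.getD (idx a) 0 :=
    fun a ha => List.getD_append _ _ _ _ (hlow a ha)
  have hgetD_v : ∀ a : Fin p.length, t ≤ (a : ℕ) →
      (u ++ v).getD (idx a) 0 = v.getD (idx a - u.length) 0 :=
    fun a ha => List.getD_append_right _ _ _ _ (hhigh a ha)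
  rcases Nat.eq_zero_or_pos t with ht0 | ht0
  · refine hv ⟨fun a => idx a - u.length, fun a b hab => ?_, fun a => ?_, fun a b => ?_⟩
    · exact Nat.sub_lt_sub_right (hhigh a (by omega)) (hmono hab)
    · exact Nat.sub_lt_left_of_lt_add (hhigh a (by omega)) (hlt' a)
    · rw [hiff, hgetD_v a (by omega), hgetD_v b (by omega)]
  rcases le_or_gt p.length t with htp | htp
  · refine hu ⟨idx, hmono, fun a => hlow a (by omega), fun a b => ?_⟩
    rw [hiff, hgetD_u a (by omega), hgetD_u b (by omega)]
  refine hsi ⟨t, ht0, htp, take_lt_drop_of_occurrence hp hiff fun a b ha hb => ?_⟩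
  have hb' : idx b - u.length < v.length := Nat.sub_lt_left_of_lt_add (hhigh b hb) (hlt' b)
  rw [hgetD_u a ha, hgetD_v b hb, List.getD_eq_getElem _ _ (hlow a ha),
    List.getD_eq_getElem _ _ hb']
  exact huv _ (List.getElem_mem _) _ (List.getElem_mem _)

theorem avoidsPattern_shiftConcat {p u v : List ℕ} (hp : p.Nodup) (hsi : SumIndecomposable p)
    (hu : AvoidsPattern u p) (hv : AvoidsPattern v p) : AvoidsPattern (shiftConcat u v) p :=
  hu.append hp hsi (hv.map_add _) fun _ hx _ hy => by
    obtain ⟨z, -, rfl⟩ := List.mem_map.mp hy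
    exact (le_listMax hx).trans (Nat.le_add_left _ _)

theorem stmt1_general (p : List ℕ) (hp : IsPattern p)
    (hsi : SumIndecomposable p) (m n : ℕ) :
    ascentAvoidCount p m * ascentAvoidCount p n ≤ ascentAvoidCount p (m + n) := by
  have hnodup : p.Nodup := hp.nodup_iff.mpr List.nodup_range
  rw [ascentAvoidCount, ascentAvoidCount, ascentAvoidCount, ← Set.ncard_prod]
  refine Set.ncard_le_ncard_of_injOn (fun q => shiftConcat q.1 q.2) ?_ ?_
    ((finite_setOf_isAscentSeq (m + n)).subset fun s hs => ⟨hs.1, hs.2.1⟩)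
  · rintro ⟨u, v⟩ ⟨⟨rfl, hu, hup⟩, ⟨rfl, hv, hvp⟩⟩
    exact ⟨by simp [shiftConcat], isAscentSeq_shiftConcat hu hv,
      avoidsPattern_shiftConcat hnodup hsi hup hvp⟩
  · rintro ⟨u, v⟩ ⟨⟨hu, -⟩, -⟩ ⟨u', v'⟩ ⟨⟨hu', -⟩, -⟩ h
    obtain ⟨rfl, rfl⟩ := shiftConcat_inj (hu.trans hu'.symm) h
    rfl

/-- Supermultiplicativity of the counts of π-avoiding ascent sequences. -/
theorem stmt1 (p : List ℕ) (hp : IsPattern p) (hp3 : 3 ≤ p.length)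
    (hsi : SumIndecomposable p) (m n : ℕ) (hm : 1 ≤ m) (hn : 1 ≤ n) :
    ascentAvoidCount p m * ascentAvoidCount p n ≤ ascentAvoidCount p (m + n) :=
  stmt1_general p hp hsi m n
end

section
/- The number of ascent sequences of length n avoiding the pattern 012 (three strictly increasing entries) is 2^{n−1} for n ≥ 1. -/
open Filter Topology

/-!
A 012-avoiding ascent sequence is exactly a 0/1 word starting with 0. If `i` is the first
position with `x_i ≥ 2`, then `x_i ≤ asc (x_0 … x_{i-1}) + 1` forces an ascent
`x_j < x_{j+1}` before `i`, and `x_j < x_{j+1} ≤ 1 < x_i` is a copy of 012. Conversely a 0/1 word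
starting with 0 contains no 012 and satisfies the ascent condition trivially. There are
`2^(n-1)` such words of length `n` (and one, the empty word, of length 0).
-/

lemma exists_lt_getElem_succ_of_asc_pos {t : List ℕ} (h : 0 < asc t) :
    ∃ j, ∃ hj : j + 1 < t.length, t[j] < t[j + 1] := by
  obtain ⟨p, hp⟩ := List.exists_mem_of_length_pos h
  obtain ⟨hmem, hlt⟩ := List.mem_filter.1 hp
  obtain ⟨j, hj, rfl⟩ := List.getElem_of_mem hmem
  have hj' : j + 1 < t.length := by
    simp only [List.length_zip, List.length_tail] at hj
    omega
  exact ⟨j, hj', by simpa using hlt⟩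

lemma getD_le_one_of_forall_le_one {s : List ℕ} (hs : ∀ x ∈ s, x ≤ 1) (i : ℕ) :
    s.getD i 0 ≤ 1 := by
  by_cases hi : i < s.length
  · rw [List.getD_eq_getElem _ _ hi]
    exact hs _ (List.getElem_mem hi)
  · rw [List.getD_eq_default _ _ (by omega)]
    omega

lemma not_contains012_of_forall_le_one {s : List ℕ} (hs : ∀ x ∈ s, x ≤ 1) :
    ¬ Contains012 s := by
  rintro ⟨a, b, c, -, -, -, hab, hbc⟩
  have := getD_le_one_of_forall_le_one hs c
  omega

lemma IsAscentSeq.getD_zero {s : List ℕ} (hs : IsAscentSeq s) : s.getD 0 0 = 0 := by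
  rcases s with _ | ⟨a, t⟩
  · rfl
  · exact hs.1 (Nat.succ_pos _)

lemma IsAscentSeq.getD_le_one_of_not_contains012 {s : List ℕ} (hs : IsAscentSeq s)
    (h012 : ¬ Contains012 s) : ∀ i, s.getD i 0 ≤ 1 := by
  intro i
  induction i using Nat.strong_induction_on with
  | _ i ih =>
  rcases Nat.eq_zero_or_pos i with rfl | hi
  · rw [hs.getD_zero]
    exact Nat.zero_le 1
  by_cases hil : i < s.length
  swap
  · rw [List.getD_eq_default _ _ (by omega)]
    omega
  by_contra! hgt
  have hasc : 0 < asc (s.take i) := by have := hs.2 i hi hil; omega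
  obtain ⟨j, hj, hlt⟩ := exists_lt_getElem_succ_of_asc_pos hasc
  simp only [List.length_take, List.getElem_take] at hj hlt
  refine h012 ⟨j, j + 1, i, by omega, by omega, hil, ?_, ?_⟩
  · rwa [List.getD_eq_getElem _ _ (by omega), List.getD_eq_getElem _ _ (by omega)]
  · have := ih (j + 1) (by omega)
    omega

lemma isAscentSeq_and_not_contains012_iff {s : List ℕ} :
    IsAscentSeq s ∧ ¬ Contains012 s ↔ s.getD 0 0 = 0 ∧ ∀ x ∈ s, x ≤ 1 := by
  constructor
  · rintro ⟨hs, h012⟩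
    refine ⟨hs.getD_zero, fun x hx => ?_⟩
    obtain ⟨i, hi, rfl⟩ := List.getElem_of_mem hx
    have := hs.getD_le_one_of_not_contains012 h012 i
    rwa [List.getD_eq_getElem _ _ hi] at this
  · rintro ⟨h0, hle⟩
    refine ⟨⟨fun _ => h0, fun i _ _ => ?_⟩, not_contains012_of_forall_le_one hle⟩
    exact (getD_le_one_of_forall_le_one hle i).trans (Nat.le_add_left 1 _)

lemma ncard_setOf_length_forall_le_one (m : ℕ) :
    {t : List ℕ | t.length = m ∧ ∀ x ∈ t, x ≤ 1}.ncard = 2 ^ m := by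
  have hrange : Set.range (fun v : Fin m → Fin 2 => List.ofFn fun i => (v i : ℕ)) =
      {t : List ℕ | t.length = m ∧ ∀ x ∈ t, x ≤ 1} := by
    ext t
    constructor
    · rintro ⟨v, rfl⟩
      refine ⟨List.length_ofFn, fun x hx => ?_⟩
      obtain ⟨i, rfl⟩ := List.mem_ofFn.1 hx
      exact Nat.le_of_lt_succ (v i).isLt
    · rintro ⟨rfl, ht⟩
      refine ⟨fun i => ⟨t[i], Nat.lt_succ_of_le (ht _ (List.getElem_mem _))⟩, ?_⟩
      exact List.ofFn_getElem
  have hinj : Function.Injective (fun v : Fin m → Fin 2 => List.ofFn fun i => (v i : ℕ)) :=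
    fun v w h => funext fun i => Fin.ext (congrFun (List.ofFn_injective h) i)
  rw [← hrange, Set.ncard_range_of_injective hinj, Nat.card_eq_fintype_card]
  simp

lemma ncard_setOf_length_getD_zero_forall_le_one (n : ℕ) :
    {s : List ℕ | s.length = n ∧ s.getD 0 0 = 0 ∧ ∀ x ∈ s, x ≤ 1}.ncard = 2 ^ (n - 1) := by
  cases n with
  | zero =>
    have hset : {s : List ℕ | s.length = 0 ∧ s.getD 0 0 = 0 ∧ ∀ x ∈ s, x ≤ 1} = {[]} := by
      ext s
      simp +contextual [List.length_eq_zero_iff]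
    rw [hset, Set.ncard_singleton]
    rfl
  | succ m =>
    have hset : {s : List ℕ | s.length = m + 1 ∧ s.getD 0 0 = 0 ∧ ∀ x ∈ s, x ≤ 1} =
        List.cons 0 '' {t : List ℕ | t.length = m ∧ ∀ x ∈ t, x ≤ 1} := by
      ext s
      rcases s with _ | ⟨a, t⟩
      · simp
      · simp only [Set.mem_ofPred_eq, Set.mem_image, List.cons.injEq, List.length_cons,
          List.getD_cons_zero, List.forall_mem_cons]
        aesop
    rw [hset, Set.ncard_image_of_injective _ List.cons_injective,
      ncard_setOf_length_forall_le_one, Nat.add_sub_cancel]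

theorem stmt11_general (n : ℕ) :
    {s : List ℕ | s.length = n ∧ IsAscentSeq s ∧ ¬ Contains012 s}.ncard =
      2 ^ (n - 1) := by
  simp_rw [isAscentSeq_and_not_contains012_iff]
  exact ncard_setOf_length_getD_zero_forall_le_one n

/-- The number of 012-avoiding ascent sequences of length `n` is `2^(n-1)`. -/
theorem stmt11 (n : ℕ) (hn : 1 ≤ n) :
    {s : List ℕ | s.length = n ∧ IsAscentSeq s ∧ ¬ Contains012 s}.ncard =
      2 ^ (n - 1) :=
  stmt11_general n
end
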